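/- arXiv:1811.08613 — 4 statements merged into one kernel-verified Lean document; each statement's English description precedes it below -/
import Mathlib

section
/- No absolute prime contains all four digits 1, 3, 7, 9 in its decimal representation. -/
def AbsolutePrime (N : ℕ) : Prop :=
  ∀ l : List ℕ, l.Perm (Nat.digits 10 N) → (Nat.ofDigits 10 l).Prime

lemma key_perm (rest : List ℕ) : ∃ p : List ℕ, p.Perm [1, 3, 7, 9] ∧
    7 ∣ Nat.ofDigits 10 (p ++ rest) ∧ 7 < Nat.ofDigits 10 (p ++ rest) := by
  have hm : Nat.ofDigits 10 rest % 7 = 0 ∨ Nat.ofDigits 10 rest % 7 = 1 ∨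
      Nat.ofDigits 10 rest % 7 = 2 ∨ Nat.ofDigits 10 rest % 7 = 3 ∨
      Nat.ofDigits 10 rest % 7 = 4 ∨ Nat.ofDigits 10 rest % 7 = 5 ∨
      Nat.ofDigits 10 rest % 7 = 6 := by omega
  rcases hm with h | h | h | h | h | h | h
  · exact ⟨[1, 3, 9, 7], by decide, by rw [Nat.ofDigits_append]; norm_num [Nat.ofDigits]; omega,
      by rw [Nat.ofDigits_append]; norm_num [Nat.ofDigits]; omega⟩
  · exact ⟨[3, 1, 9, 7], by decide, by rw [Nat.ofDigits_append]; norm_num [Nat.ofDigits]; omega,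
      by rw [Nat.ofDigits_append]; norm_num [Nat.ofDigits]; omega⟩
  · exact ⟨[1, 9, 3, 7], by decide, by rw [Nat.ofDigits_append]; norm_num [Nat.ofDigits]; omega,
      by rw [Nat.ofDigits_append]; norm_num [Nat.ofDigits]; omega⟩
  · exact ⟨[1, 7, 9, 3], by decide, by rw [Nat.ofDigits_append]; norm_num [Nat.ofDigits]; omega,
      by rw [Nat.ofDigits_append]; norm_num [Nat.ofDigits]; omega⟩
  · exact ⟨[1, 7, 3, 9], by decide, by rw [Nat.ofDigits_append]; norm_num [Nat.ofDigits]; omega,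
      by rw [Nat.ofDigits_append]; norm_num [Nat.ofDigits]; omega⟩
  · exact ⟨[1, 3, 7, 9], by decide, by rw [Nat.ofDigits_append]; norm_num [Nat.ofDigits]; omega,
      by rw [Nat.ofDigits_append]; norm_num [Nat.ofDigits]; omega⟩
  · exact ⟨[1, 9, 7, 3], by decide, by rw [Nat.ofDigits_append]; norm_num [Nat.ofDigits]; omega,
      by rw [Nat.ofDigits_append]; norm_num [Nat.ofDigits]; omega⟩

theorem absolute_prime_not_all_four (N : ℕ) (h : AbsolutePrime N) :
    ¬ (1 ∈ Nat.digits 10 N ∧ 3 ∈ Nat.digits 10 N ∧ 7 ∈ Nat.digits 10 N ∧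
       9 ∈ Nat.digits 10 N) := by
  rintro ⟨h1, h3, h7, h9⟩
  set d := Nat.digits 10 N with hd
  have h3' : 3 ∈ d.erase 1 := (List.mem_erase_of_ne (by norm_num)).mpr h3
  have h7' : 7 ∈ (d.erase 1).erase 3 :=
    (List.mem_erase_of_ne (by norm_num)).mpr ((List.mem_erase_of_ne (by norm_num)).mpr h7)
  have h9' : 9 ∈ ((d.erase 1).erase 3).erase 7 :=
    (List.mem_erase_of_ne (by norm_num)).mpr ((List.mem_erase_of_ne (by norm_num)).mpr
      ((List.mem_erase_of_ne (by norm_num)).mpr h9))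
  set rest := (((d.erase 1).erase 3).erase 7).erase 9 with hrest
  have hperm : d.Perm ([1, 3, 7, 9] ++ rest) := by
    show d.Perm (1 :: 3 :: 7 :: 9 :: rest)
    refine (List.perm_cons_erase h1).trans (List.Perm.cons 1 ?_)
    refine (List.perm_cons_erase h3').trans (List.Perm.cons 3 ?_)
    refine (List.perm_cons_erase h7').trans (List.Perm.cons 7 ?_)
    exact List.perm_cons_erase h9'
  obtain ⟨p, hp, hdvd, hlt⟩ := key_perm rest
  have hl : (p ++ rest).Perm d := ((hp.append_right rest).trans hperm.symm)
  have hprime := h (p ++ rest) hl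
  rcases (hprime.eq_one_or_self_of_dvd 7 hdvd) with h' | h'
  · omega
  · omega
end

section
/- No absolute prime contains in its decimal representation three occurrences of a digit a and two occurrences of a digit b with a ≠ b. -/
private def arrs5 (a b : ℕ) : List (List ℕ) :=
  [[a,a,a,b,b],[a,a,b,a,b],[a,a,b,b,a],[a,b,a,a,b],[a,b,a,b,a],[a,b,b,a,a],
   [b,a,a,a,b],[b,a,a,b,a],[b,a,b,a,a],[b,b,a,a,a]]

private def ok5 (a b r : ℕ) : Bool :=
  (arrs5 a b).any fun c => decide (c.Perm [a,a,a,b,b]) && ((Nat.ofDigits 10 c + 5*r) % 7 == 0)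

private lemma key_bool : ∀ a : Fin 10, ∀ b : Fin 10, ∀ r : Fin 7,
    (a.1 % 2 = 1 ∧ b.1 % 2 = 1 ∧ a.1 ≠ b.1) → ok5 a.1 b.1 r.1 = true := by decide

private lemma key (a b r : ℕ) (ha : a < 10) (hb : b < 10) (hr : r < 7)
    (ha2 : a % 2 = 1) (hb2 : b % 2 = 1) (hab : a ≠ b) :
    ∃ c ∈ arrs5 a b, c.Perm [a,a,a,b,b] ∧ (Nat.ofDigits 10 c + 5*r) % 7 = 0 := by
  have := key_bool ⟨a, ha⟩ ⟨b, hb⟩ ⟨r, hr⟩ ⟨ha2, hb2, hab⟩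
  simpa [ok5, List.any_eq_true] using this

private lemma ofDigits_lb (x y : ℕ) (t : List ℕ) (hy : 1 ≤ y) :
    10 ≤ Nat.ofDigits 10 (x :: y :: t) := by
  simp only [Nat.ofDigits_cons]
  have : (0:ℕ) ≤ Nat.ofDigits 10 t := Nat.zero_le _
  omega

theorem absolute_prime_not_three_two (N a b : ℕ) (ha : a < 10) (hb : b < 10)
    (hab : a ≠ b) (h : AbsolutePrime N) :
    ¬ (3 ≤ (Nat.digits 10 N).count a ∧ 2 ≤ (Nat.digits 10 N).count b) := by
  rintro ⟨h3, h2⟩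
  set D := Nat.digits 10 N with hD
  by_cases hpar : a % 2 = 0 ∨ b % 2 = 0
  · -- some digit is even: make an even number ≥ 10
    obtain ⟨e, f, he, hef, hce, hcf⟩ :
        ∃ e f, e % 2 = 0 ∧ e ≠ f ∧ 2 ≤ D.count e ∧ 2 ≤ D.count f := by
      rcases hpar with h' | h'
      · exact ⟨a, b, h', hab, by omega, h2⟩
      · exact ⟨b, a, h', hab.symm, h2, by omega⟩
    have hfD : f ∈ D := List.count_pos_iff.mp (by omega)
    have p1 : D.Perm (f :: D.erase f) := List.perm_cons_erase hfD
    have heD : e ∈ D.erase f := by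
      have : (D.erase f).count e = D.count e := List.count_erase_of_ne hef
      exact List.count_pos_iff.mp (by omega)
    have p2 : (D.erase f).Perm (e :: (D.erase f).erase e) := List.perm_cons_erase heD
    set rest := (D.erase f).erase e with hrest
    have pD : D.Perm (f :: e :: rest) := p1.trans (p2.cons f)
    obtain ⟨p, q, hp0, hq1, hperm⟩ :
        ∃ p q, p % 2 = 0 ∧ 1 ≤ q ∧ D.Perm (p :: q :: rest) := by
      rcases Nat.eq_zero_or_pos f with hf0 | hf1
      · exact ⟨f, e, by omega, by omega, pD⟩
      · exact ⟨e, f, he, hf1, pD.trans (List.Perm.swap e f rest)⟩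
    have hM := h (p :: q :: rest) hperm.symm
    set M := Nat.ofDigits 10 (p :: q :: rest) with hMdef
    have hMeq : M = p + 10 * (q + 10 * Nat.ofDigits 10 rest) := by
      simp [hMdef, Nat.ofDigits_cons]
    have h10 : 10 ≤ M := ofDigits_lb p q rest hq1
    have h2dvd : (2 : ℕ) ∣ M := by omega
    rcases hM.eq_one_or_self_of_dvd 2 h2dvd with h' | h' <;> omega
  · -- both odd: use divisibility by 7
    push_neg at hpar
    have ha2 : a % 2 = 1 := by omega
    have hb2 : b % 2 = 1 := by omega
    -- peel three a's and two b's off D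
    have haD : a ∈ D := List.count_pos_iff.mp (by omega)
    have p1 : D.Perm (a :: D.erase a) := List.perm_cons_erase haD
    set D1 := D.erase a with hD1
    have hc1 : List.count a D1 = List.count a D - 1 := List.count_erase_self
    have p2 : D1.Perm (a :: D1.erase a) :=
      List.perm_cons_erase (List.count_pos_iff.mp (by omega))
    set D2 := D1.erase a with hD2
    have hc2 : List.count a D2 = List.count a D1 - 1 := List.count_erase_self
    have p3 : D2.Perm (a :: D2.erase a) :=
      List.perm_cons_erase (List.count_pos_iff.mp (by omega))
    set D3 := D2.erase a with hD3
    have e1 : List.count b D1 = List.count b D := List.count_erase_of_ne hab.symm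
    have e2 : List.count b D2 = List.count b D1 := List.count_erase_of_ne hab.symm
    have e3 : List.count b D3 = List.count b D2 := List.count_erase_of_ne hab.symm
    have p4 : D3.Perm (b :: D3.erase b) :=
      List.perm_cons_erase (List.count_pos_iff.mp (by omega))
    set D4 := D3.erase b with hD4
    have hc4 : List.count b D4 = List.count b D3 - 1 := List.count_erase_self
    have p5 : D4.Perm (b :: D4.erase b) :=
      List.perm_cons_erase (List.count_pos_iff.mp (by omega))
    set rest := D4.erase b with hrest
    have pD : D.Perm (a :: a :: a :: b :: b :: rest) :=
      p1.trans ((p2.trans ((p3.trans ((p4.trans (p5.cons b)).cons a)).cons a)).cons a)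
    set R := Nat.ofDigits 10 rest with hR
    obtain ⟨c, hcmem, hcperm, hmod⟩ :=
      key a b (R % 7) ha hb (Nat.mod_lt _ (by norm_num)) ha2 hb2 hab
    have hlperm : (c ++ rest).Perm D := by
      have : (c ++ rest).Perm ([a,a,a,b,b] ++ rest) := hcperm.append_right rest
      exact this.trans pD.symm
    have hM := h (c ++ rest) hlperm
    set M := Nat.ofDigits 10 (c ++ rest) with hMdef
    have hlen : c.length = 5 := by
      have := hcperm.length_eq
      simpa using this
    have hMeq : M = Nat.ofDigits 10 c + 100000 * R := by
      rw [hMdef, Nat.ofDigits_append, hlen]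
      norm_num
      exact hR.symm
    -- lower bound on ofDigits c
    have hcl : 10 ≤ Nat.ofDigits 10 c := by
      rcases c with _ | ⟨x, _ | ⟨y, t⟩⟩
      · simp at hlen
      · simp at hlen
      ·
        have hy : y ∈ (x :: y :: t) := by simp
        have : y = a ∨ y = b := by
          have := hcperm.mem_iff.mp hy
          simpa using this
        exact ofDigits_lb x y t (by omega)
    have h7dvd : (7 : ℕ) ∣ M := by
      have h1 : M % 7 = (Nat.ofDigits 10 c + 100000 * R) % 7 := by rw [hMeq]
      omega
    rcases hM.eq_one_or_self_of_dvd 7 h7dvd with h' | h' <;> omega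
end

section
/- There is no 5-digit absolute prime. -/
def myVal : List ℕ → ℕ
  | [] => 0
  | d :: L => d + 10 * myVal L

lemma myVal_eq (l : List ℕ) : myVal l = Nat.ofDigits 10 l := by
  induction l with
  | nil => simp [myVal, Nat.ofDigits]
  | cons d L ih => simp [myVal, Nat.ofDigits, ih]

def insAll (x : ℕ) : List ℕ → List (List ℕ)
  | [] => [[x]]
  | y :: l => (x :: y :: l) :: (insAll x l).map (y :: ·)

def permsL : List ℕ → List (List ℕ)
  | [] => [[]]
  | x :: l => (permsL l).flatMap (insAll x)

lemma mem_insAll {x : ℕ} {l p : List ℕ} (h : p ∈ insAll x l) : p.Perm (x :: l) := by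
  induction l generalizing p with
  | nil => simp [insAll] at h; subst h; exact List.Perm.refl _
  | cons y t ih =>
    simp only [insAll, List.mem_cons, List.mem_map] at h
    rcases h with rfl | ⟨q, hq, rfl⟩
    · exact List.Perm.refl _
    · exact ((ih hq).cons y).trans (List.Perm.swap x y t)

lemma mem_permsL {l p : List ℕ} (h : p ∈ permsL l) : p.Perm l := by
  induction l generalizing p with
  | nil => simp [permsL] at h; subst h; exact List.Perm.refl _
  | cons x t ih =>
    simp only [permsL, List.mem_flatMap] at h
    obtain ⟨q, hq, hp⟩ := h
    exact (mem_insAll hp).trans ((ih hq).cons x)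

def primesL : List ℕ := [3,7,11,13,17,19,23,29,31,37,41]
def badL (l : List ℕ) : Bool := (permsL l).any fun p => primesL.any fun k => myVal p % k == 0

theorem allbad : ∀ a ∈ [1,3,7,9], ∀ b ∈ [1,3,7,9], ∀ c ∈ [1,3,7,9], ∀ d ∈ [1,3,7,9], ∀ e ∈ [1,3,7,9], badL [a,b,c,d,e] = true := by decide

lemma val5 (a b c d e : ℕ) :
    Nat.ofDigits 10 [a, b, c, d, e] = a + 10*b + 100*c + 1000*d + 10000*e := by
  simp [Nat.ofDigits]; ring

lemma not_prime_of_bad {x : ℕ} (r : List ℕ) (hx : 2 ∣ x ∨ 5 ∣ x)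
    (hv : 10 ≤ Nat.ofDigits 10 (x :: r)) : ¬ (Nat.ofDigits 10 (x :: r)).Prime := by
  intro hp
  have hc : Nat.ofDigits 10 (x :: r) = x + 10 * Nat.ofDigits 10 r := by
    simp [Nat.ofDigits_cons]
  rcases hx with hx | hx
  · have h2 : 2 ∣ Nat.ofDigits 10 (x :: r) := by omega
    rcases hp.eq_one_or_self_of_dvd 2 h2 with h | h <;> omega
  · have h5 : 5 ∣ Nat.ofDigits 10 (x :: r) := by omega
    rcases hp.eq_one_or_self_of_dvd 5 h5 with h | h <;> omega

theorem no_5_digit_absolute_prime :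
    ¬ ∃ N : ℕ, (Nat.digits 10 N).length = 5 ∧ AbsolutePrime N := by
  rintro ⟨N, hlen, habs⟩
  have hN0 : N ≠ 0 := by
    intro h; rw [h] at hlen; simp at hlen
  rcases hdig : Nat.digits 10 N with _ | ⟨a, _ | ⟨b, _ | ⟨c, _ | ⟨d, _ | ⟨e, rest⟩⟩⟩⟩⟩ <;>
    rw [hdig] at hlen <;> simp at hlen
  subst hlen
  have habs' : ∀ l : List ℕ, l.Perm [a, b, c, d, e] → (Nat.ofDigits 10 l).Prime := by
    intro l hl; exact habs l (hdig ▸ hl)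
  have hlt : ∀ x ∈ Nat.digits 10 N, x < 10 := fun x hx => Nat.digits_lt_base (by norm_num) hx
  rw [hdig] at hlt
  have ha10 : a < 10 := hlt a (by simp)
  have hb10 : b < 10 := hlt b (by simp)
  have hc10 : c < 10 := hlt c (by simp)
  have hd10 : d < 10 := hlt d (by simp)
  have he10 : e < 10 := hlt e (by simp)
  have he0 : e ≠ 0 := by
    have := Nat.getLast_digit_ne_zero 10 hN0
    rw [List.getLast_congr _ (by simp) hdig] at this
    simpa using this
  -- each of a, b, c, d is in {1,3,7,9}
  have ha : a = 1 ∨ a = 3 ∨ a = 7 ∨ a = 9 := by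
    by_contra h
    have hdvd : 2 ∣ a ∨ 5 ∣ a := by interval_cases a <;> omega
    exact not_prime_of_bad [b, c, d, e] hdvd (by rw [val5]; omega)
      (habs' [a, b, c, d, e] (List.Perm.refl _))
  have hb : b = 1 ∨ b = 3 ∨ b = 7 ∨ b = 9 := by
    by_contra h
    have hdvd : 2 ∣ b ∨ 5 ∣ b := by interval_cases b <;> omega
    exact not_prime_of_bad [a, c, d, e] hdvd (by rw [val5]; omega)
      (habs' [b, a, c, d, e] (List.Perm.swap a b [c, d, e]))
  have hc : c = 1 ∨ c = 3 ∨ c = 7 ∨ c = 9 := by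
    by_contra h
    have hdvd : 2 ∣ c ∨ 5 ∣ c := by interval_cases c <;> omega
    exact not_prime_of_bad [a, b, d, e] hdvd (by rw [val5]; omega)
      (habs' [c, a, b, d, e] (List.perm_middle (l₁ := [a, b]) (l₂ := [d, e])).symm)
  have hd : d = 1 ∨ d = 3 ∨ d = 7 ∨ d = 9 := by
    by_contra h
    have hdvd : 2 ∣ d ∨ 5 ∣ d := by interval_cases d <;> omega
    exact not_prime_of_bad [a, b, c, e] hdvd (by rw [val5]; omega)
      (habs' [d, a, b, c, e] (List.perm_middle (l₁ := [a, b, c]) (l₂ := [e])).symm)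
  have he : e = 1 ∨ e = 3 ∨ e = 7 ∨ e = 9 := by
    by_contra h
    have hdvd : 2 ∣ e ∨ 5 ∣ e := by interval_cases e <;> omega
    exact not_prime_of_bad [a, b, c, d] hdvd (by rw [val5]; omega)
      (habs' [e, a, b, c, d] (List.perm_middle (l₁ := [a, b, c, d]) (l₂ := [])).symm)
  -- now use the decision procedure
  have hbad : badL [a, b, c, d, e] = true := by
    apply allbad <;> simp [*]
  simp only [badL, List.any_eq_true, beq_iff_eq] at hbad
  obtain ⟨p, hp, k, hk, hmod⟩ := hbad
  have hperm : p.Perm [a, b, c, d, e] := mem_permsL hp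
  have hprime : (Nat.ofDigits 10 p).Prime := habs' p hperm
  have hdvd : k ∣ Nat.ofDigits 10 p := by
    rw [← myVal_eq]; exact Nat.dvd_of_mod_eq_zero hmod
  have hk' : 3 ≤ k ∧ k ≤ 41 := by
    simp [primesL] at hk; omega
  -- the value is at least 11111 since all digits are ≥ 1
  have hp5 : p.length = 5 := by rw [hperm.length_eq]; rfl
  have hmem : ∀ x ∈ p, 1 ≤ x := by
    intro x hx
    have := hperm.mem_iff.mp hx
    simp at this
    rcases this with rfl | rfl | rfl | rfl | rfl <;> omega
  rcases p with _ | ⟨p1, _ | ⟨p2, _ | ⟨p3, _ | ⟨p4, _ | ⟨p5, prest⟩⟩⟩⟩⟩ <;> simp at hp5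
  subst hp5
  have h1 : 1 ≤ p1 := hmem p1 (by simp)
  have h2 : 1 ≤ p2 := hmem p2 (by simp)
  have h3 : 1 ≤ p3 := hmem p3 (by simp)
  have h4 : 1 ≤ p4 := hmem p4 (by simp)
  have h5 : 1 ≤ p5 := hmem p5 (by simp)
  have hvbig : 11111 ≤ Nat.ofDigits 10 [p1, p2, p3, p4, p5] := by rw [val5]; omega
  rcases hprime.eq_one_or_self_of_dvd k hdvd with h | h <;> omega
end

section
/- If N = K·10^6 + a·A_6 + (b−a)·10^0 (i.e., N has decimal form c_1…c_{n−6} a a a a a b with K = c_1…c_{n−6}), a and b are odd digits with a ≠ b, and N is an absolute prime, then K is divisible by 7. -/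
theorem K_div_seven (K a b N : ℕ)
    (ha : a = 1 ∨ a = 3 ∨ a = 7 ∨ a = 9) (hb : b = 1 ∨ b = 3 ∨ b = 7 ∨ b = 9)
    (hab : a ≠ b) (hN : N = K * 10 ^ 6 + a * 111110 + b)
    (h : AbsolutePrime N) : 7 ∣ K := by
  have ha10 : a < 10 := by omega
  have hb10 : b < 10 := by omega
  have ha0 : a ≠ 0 := by omega
  have hdig : Nat.digits 10 N = [b, a, a, a, a, a] ++ Nat.digits 10 K := by
    have hv : N = Nat.ofDigits 10 ([b, a, a, a, a, a] ++ Nat.digits 10 K) := by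
      rw [Nat.ofDigits_append, Nat.ofDigits_digits, hN]
      simp only [Nat.ofDigits_cons, Nat.ofDigits_nil, List.length_cons, List.length_nil]
      ring
    rw [hv, Nat.digits_ofDigits 10 (by norm_num)]
    · intro x hx
      simp only [List.mem_append, List.mem_cons, List.not_mem_nil, or_false] at hx
      rcases hx with (hx | hx | hx | hx | hx | hx) | hx
      · omega
      · omega
      · omega
      · omega
      · omega
      · omega
      · exact Nat.digits_lt_base (by norm_num) hx
    · intro hne
      rw [List.getLast_append]
      split
      · next h' =>
        simpa using ha0
      · next h' =>
        simp only [List.isEmpty_iff] at h'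
        have hK : K ≠ 0 := fun hK0 => h' (by simp [hK0])
        exact Nat.getLast_digit_ne_zero 10 hK
  have key : ∀ L : List ℕ, L.Perm [b, a, a, a, a, a] →
      (Nat.ofDigits 10 L + 1000000 * K).Prime := by
    intro L hL
    have hlen : L.length = 6 := by rw [hL.length_eq]; rfl
    have hp := h (L ++ Nat.digits 10 K) (by rw [hdig]; exact hL.append_right _)
    rw [Nat.ofDigits_append, Nat.ofDigits_digits, hlen] at hp
    norm_num at hp
    exact hp
  have p0 := key [b, a, a, a, a, a] (List.Perm.refl _)
  have p1 := key [a, b, a, a, a, a] (List.Perm.swap _ _ _)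
  have p2 := key [a, a, b, a, a, a] (((List.Perm.swap b a _).cons a).trans (List.Perm.swap b a _))
  have p3 := key [a, a, a, b, a, a]
    (((((List.Perm.swap b a _).cons a).cons a).trans ((List.Perm.swap b a _).cons a)).trans
      (List.Perm.swap b a _))
  have p4 := key [a, a, a, a, b, a]
    ((((((List.Perm.swap b a _).cons a).cons a).cons a).trans
      (((List.Perm.swap b a _).cons a).cons a)).trans
      ((List.Perm.swap b a _).cons a) |>.trans (List.Perm.swap b a _))
  have p5 := key [a, a, a, a, a, b]
    (((((((List.Perm.swap b a _).cons a).cons a).cons a).cons a).trans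
      ((((List.Perm.swap b a _).cons a).cons a).cons a)).trans
      (((List.Perm.swap b a _).cons a).cons a) |>.trans
      ((List.Perm.swap b a _).cons a) |>.trans (List.Perm.swap b a _))
  simp only [Nat.ofDigits_cons, Nat.ofDigits_nil] at p0 p1 p2 p3 p4 p5
  have nd : ∀ v : ℕ, v.Prime → v > 7 → ¬ 7 ∣ v := by
    intro v hv hv7 hdvd
    rcases hv.eq_one_or_self_of_dvd 7 hdvd with h' | h' <;> omega
  have big0 := nd _ p0 (by clear hN hdig h key; omega)
  have big1 := nd _ p1 (by clear hN hdig h key; omega)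
  have big2 := nd _ p2 (by clear hN hdig h key; omega)
  have big3 := nd _ p3 (by clear hN hdig h key; omega)
  have big4 := nd _ p4 (by clear hN hdig h key; omega)
  have big5 := nd _ p5 (by clear hN hdig h key; omega)
  have hm : K % 7 = 0 ∨ K % 7 = 1 ∨ K % 7 = 2 ∨ K % 7 = 3 ∨ K % 7 = 4 ∨ K % 7 = 5 ∨ K % 7 = 6 := by
    omega
  clear p0 p1 p2 p3 p4 p5 h hdig hN key nd
  rcases ha with rfl|rfl|rfl|rfl <;> rcases hb with rfl|rfl|rfl|rfl <;>
    rcases hm with hm|hm|hm|hm|hm|hm|hm <;> omega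
end
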